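/- arXiv:1412.2538 — 3 statements merged into one kernel-verified Lean document; each statement's English description precedes it below -/
import Mathlib

section
/- With S_K(λ) as defined by the structure constants b(i)·b(j) = Σ_{k=0}^{i} C(j+k,i) C(j+k,k) C(m+j+i,i-k) b(j+k) over a field of characteristic 2, the algebra S_K(λ) is commutative, i.e. b(i)·b(j) = b(j)·b(i) for all 0 ≤ i, j ≤ λ₂. -/
open Finset

/-- Reindexing by `t = j + k` puts the structure constants in a form symmetric in `i` and `j`;
the terms with `t < j` that this adds vanish because `t.choose j = 0`. -/
theorem sum_range_choose_smul_eq_sum_choose_smul {R M : Type*} [Semiring R] [AddCommMonoid M]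
    [Module R M] (N i j : ℕ) (f : ℕ → M) :
    ∑ k ∈ range (i + 1),
        (((j + k).choose i * (j + k).choose k * N.choose (i - k) : ℕ) : R) • f (j + k) =
      ∑ t ∈ range (i + j + 1), ((t.choose i * t.choose j * N.choose (i + j - t) : ℕ) : R) • f t := by
  rw [show i + j + 1 = j + (i + 1) by omega, sum_range_add _ j (i + 1)]
  have below_j : ∑ t ∈ range j,
      ((t.choose i * t.choose j * N.choose (i + j - t) : ℕ) : R) • f t = 0 :=
    sum_eq_zero fun t ht => by
      rw [Nat.choose_eq_zero_of_lt (mem_range.mp ht)]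
      simp
  rw [below_j, zero_add]
  refine sum_congr rfl fun k _ => ?_
  rw [Nat.choose_symm_add, show i + j - (j + k) = i - k by omega]

theorem SK_comm_general {K : Type*} [Field K]
    {S : Type*} [Ring S] [Algebra K S]
    (lam2 : ℕ) (m : ℕ)
    (b : ℕ → S)
    (hmul : ∀ i j : ℕ, i ≤ lam2 → j ≤ lam2 →
      b i * b j = ∑ k ∈ Finset.range (i + 1),
        ((Nat.choose (j + k) i * Nat.choose (j + k) k *
          Nat.choose (m + j + i) (i - k) : ℕ) : K) • b (j + k)) :
    ∀ i j : ℕ, i ≤ lam2 → j ≤ lam2 → b i * b j = b j * b i := by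
  intro i j hi hj
  rw [hmul i j hi hj, hmul j i hj hi, sum_range_choose_smul_eq_sum_choose_smul,
    sum_range_choose_smul_eq_sum_choose_smul, add_comm j i, add_right_comm m j i]
  simp_rw [mul_comm (Nat.choose _ j)]

theorem SK_comm {K : Type*} [Field K] [CharP K 2]
    {S : Type*} [Ring S] [Algebra K S]
    (lam1 lam2 : ℕ) (hlam : lam2 ≤ lam1) (m : ℕ) (hm : m = lam1 - lam2)
    (b : ℕ → S)
    (hindep : LinearIndependent K (fun i : Fin (lam2 + 1) => b i))
    (hspan : Submodule.span K (Set.range fun i : Fin (lam2 + 1) => b i) = ⊤)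
    (hzero : ∀ a : ℕ, lam2 < a → b a = 0)
    (hmul : ∀ i j : ℕ, i ≤ lam2 → j ≤ lam2 →
      b i * b j = ∑ k ∈ Finset.range (i + 1),
        ((Nat.choose (j + k) i * Nat.choose (j + k) k *
          Nat.choose (m + j + i) (i - k) : ℕ) : K) • b (j + k)) :
    ∀ i j : ℕ, i ≤ lam2 → j ≤ lam2 → b i * b j = b j * b i :=
  SK_comm_general lam2 m b hmul
end

section
/- In S_K(λ) over a field of characteristic 2: if i has binary expansion i = Σ_t i_t 2^t with i_t ∈ {0,1}, then b(i) = ∏_{t : i_t = 1} b(2^t). -/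
/-!
For `r < 2 ^ t`, Vandermonde gives `(2 ^ t + k).choose r ≡ k.choose r (mod 2)`, so in the
product `b r * b (2 ^ t)` only the term `k = r` survives, with coefficient `1`:
`b r * b (2 ^ t) = b (2 ^ t + r)`. Splitting off the leading binary digit repeatedly gives the
product formula, the empty product being accounted for by `b 0 = 1`, which holds because `b 0`
acts as the identity on a spanning set.
-/

open Finset

theorem Nat.cast_choose_prime_pow_add {R : Type*} [Semiring R] {p : ℕ} [CharP R p]
    (hp : p.Prime) {t r : ℕ} (hr : r < p ^ t) (k : ℕ) :
    (((p ^ t + k).choose r : ℕ) : R) = k.choose r := by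
  rw [Nat.add_choose_eq, Nat.cast_sum, sum_eq_single ((0, r) : ℕ × ℕ)]
  · simp
  · rintro ⟨a, c⟩ hac hne
    rw [HasAntidiagonal.mem_antidiagonal] at hac
    have ha : a ≠ 0 := by rintro rfl; exact hne (by simp_all)
    rw [Nat.cast_mul, (CharP.cast_eq_zero_iff R p _).mpr (hp.dvd_choose_pow ha (by omega)),
      zero_mul]
  · simp

theorem Nat.filter_testBit_range_eq_toFinset_bitIndices (i : ℕ) :
    (range (i + 1)).filter (fun t => i.testBit t) = i.bitIndices.toFinset := by
  ext t
  simp only [mem_filter, mem_range, List.mem_toFinset, Nat.mem_bitIndices, and_iff_right_iff_imp]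
  intro ht
  have h2t : 2 ^ t ≤ i := Nat.ge_two_pow_of_testBit ht
  have ht2 : t < 2 ^ t := t.lt_two_pow_self
  omega

theorem Nat.sum_filter_testBit_two_pow (i : ℕ) :
    ∑ t ∈ (range (i + 1)).filter (fun t => i.testBit t), 2 ^ t = i := by
  rw [Nat.filter_testBit_range_eq_toFinset_bitIndices, sum_toFinset_bitIndices_two_pow]

theorem apply_sum_two_pow_eq_prod {M : Type*} [CommMonoid M] {f : ℕ → M} {n : ℕ}
    (h0 : f 0 = 1)
    (hadd : ∀ t r, r < 2 ^ t → 2 ^ t + r ≤ n → f (2 ^ t + r) = f r * f (2 ^ t))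
    (A : Finset ℕ) (hA : ∑ t ∈ A, 2 ^ t ≤ n) :
    f (∑ t ∈ A, 2 ^ t) = ∏ t ∈ A, f (2 ^ t) := by
  induction A using Finset.induction_on_max with
  | empty => simpa using h0
  | insert a s hlt ih =>
    have ha : a ∉ s := fun h => (hlt a h).false
    have hs : ∑ t ∈ s, 2 ^ t < 2 ^ a := Nat.geomSum_lt le_rfl hlt
    rw [sum_insert ha] at hA ⊢
    rw [prod_insert ha, hadd a _ hs hA, ih (by omega), mul_comm]

theorem eq_one_of_forall_mul_eq_self {K S : Type*} [CommSemiring K] [Semiring S] [Algebra K S]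
    {ι : Type*} {v : ι → S} (hv : Submodule.span K (Set.range v) = ⊤) {e : S}
    (he : ∀ i, e * v i = v i) : e = 1 := by
  have hmul : LinearMap.mulLeft K e = LinearMap.id := LinearMap.ext_on_range hv he
  simpa using LinearMap.congr_fun hmul 1

theorem mul_two_pow_eq_of_choose_structure_constants {K S : Type*} [Semiring K] [CharP K 2]
    [AddCommMonoid S] [Mul S] [Module K S] {n m : ℕ} {b : ℕ → S}
    (hmul : ∀ i j : ℕ, i ≤ n → j ≤ n →
      b i * b j = ∑ k ∈ range (i + 1),
        ((Nat.choose (j + k) i * Nat.choose (j + k) k *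
          Nat.choose (m + j + i) (i - k) : ℕ) : K) • b (j + k))
    {t r : ℕ} (hr : r < 2 ^ t) (hn : 2 ^ t + r ≤ n) :
    b r * b (2 ^ t) = b (2 ^ t + r) := by
  have hchoose := Nat.cast_choose_prime_pow_add (R := K) Nat.prime_two hr
  rw [hmul r (2 ^ t) (by omega) (by omega), sum_range_succ, sum_eq_zero, zero_add]
  · simp [hchoose]
  · intro k hk
    rw [Nat.cast_mul, Nat.cast_mul, hchoose, Nat.choose_eq_zero_of_lt (mem_range.mp hk)]
    simp

theorem b_prod_binary_general {K : Type*} [Field K] [CharP K 2]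
    {S : Type*} [CommRing S] [Algebra K S]
    (lam2 : ℕ) (m : ℕ)
    (b : ℕ → S)
    (hspan : Submodule.span K (Set.range fun i : Fin (lam2 + 1) => b i) = ⊤)
    (hmul : ∀ i j : ℕ, i ≤ lam2 → j ≤ lam2 →
      b i * b j = ∑ k ∈ Finset.range (i + 1),
        ((Nat.choose (j + k) i * Nat.choose (j + k) k *
          Nat.choose (m + j + i) (i - k) : ℕ) : K) • b (j + k)) :
    ∀ i : ℕ, i ≤ lam2 →
      b i = ∏ t ∈ Finset.filter (fun t => i.testBit t) (Finset.range (i + 1)),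
        b (2 ^ t) := by
  have hb0 : b 0 = 1 := eq_one_of_forall_mul_eq_self hspan fun i => by
    simpa using hmul 0 i (Nat.zero_le _) (Nat.le_of_lt_succ i.isLt)
  intro i hi
  have hsum := Nat.sum_filter_testBit_two_pow i
  conv_lhs => rw [← hsum]
  exact apply_sum_two_pow_eq_prod hb0
    (fun t r hr hn => (mul_two_pow_eq_of_choose_structure_constants hmul hr hn).symm) _
    (by rwa [hsum])

theorem b_prod_binary {K : Type*} [Field K] [CharP K 2]
    {S : Type*} [CommRing S] [Algebra K S]
    (lam1 lam2 : ℕ) (hlam : lam2 ≤ lam1) (m : ℕ) (hm : m = lam1 - lam2)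
    (b : ℕ → S)
    (hindep : LinearIndependent K (fun i : Fin (lam2 + 1) => b i))
    (hspan : Submodule.span K (Set.range fun i : Fin (lam2 + 1) => b i) = ⊤)
    (hzero : ∀ a : ℕ, lam2 < a → b a = 0)
    (hmul : ∀ i j : ℕ, i ≤ lam2 → j ≤ lam2 →
      b i * b j = ∑ k ∈ Finset.range (i + 1),
        ((Nat.choose (j + k) i * Nat.choose (j + k) k *
          Nat.choose (m + j + i) (i - k) : ℕ) : K) • b (j + k)) :
    ∀ i : ℕ, i ≤ lam2 →
      b i = ∏ t ∈ Finset.filter (fun t => i.testBit t) (Finset.range (i + 1)),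
        b (2 ^ t) :=
  b_prod_binary_general lam2 m b hspan hmul
end

section
/- In S_K(λ) over a field of characteristic 2 (with λ = (t-1, t-1), so m = 0), the identity element b(0) cannot be written as a product of two nontrivial orthogonal idempotents; equivalently, for m = 0 the only g ≥ 0 with 0 ≤ g ≤ λ₂ and C(2g, g) odd is g = 0, so the identity is the unique primitive idempotent and S_K(λ) is local. -/
/-!
The key parity fact is that `C(j, i) C(j + i, i) = C(j + i, 2i) C(2i, i)` is even for `i ≥ 1`,
since central binomial coefficients are. In characteristic 2 this kills the `k = 0` term of
`b(i) b(j)`, so multiplication by any `b(i)` with `i ≥ 1` raises the index filtration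
`span {b(a) : a ≥ r}`. Hence the span of the `b(i)`, `i ≥ 1`, is a nil ideal of codimension one,
every element is a scalar plus a nilpotent, and the algebra is local; a local ring has no
nontrivial idempotents.
-/

open Submodule

theorem Nat.two_dvd_choose_mul_choose_add (i j : ℕ) (hi : 0 < i) :
    2 ∣ j.choose i * (j + i).choose i := by
  rcases le_or_gt i j with hij | hji
  · have hswap : j.choose i * (j + i).choose i = (j + i).choose (2 * i) * (2 * i).choose i := by
      have := Nat.choose_mul (n := j + i) (k := 2 * i) (s := i) (by omega)
      rw [this, show j + i - i = j by omega, show 2 * i - i = i by omega, mul_comm]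
    rw [hswap, ← Nat.centralBinom_eq_two_mul_choose]
    exact (Nat.two_dvd_centralBinom_of_one_le hi).mul_left _
  · simp [Nat.choose_eq_zero_of_lt hji]

section TailSpan

variable (K : Type*) {S : Type*} [CommSemiring K] [Ring S] [Algebra K S]

def tailSpan (b : ℕ → S) (r : ℕ) : Submodule K S :=
  span K (b '' Set.Ici r)

variable {K} {b : ℕ → S}

theorem mem_tailSpan {a r : ℕ} (h : r ≤ a) : b a ∈ tailSpan K b r :=
  subset_span ⟨a, h, rfl⟩

theorem tailSpan_eq_bot {n : ℕ} (hzero : ∀ a, n < a → b a = 0) :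
    tailSpan K b (n + 1) = ⊥ := by
  rw [tailSpan, span_eq_bot]
  rintro _ ⟨a, ha, rfl⟩
  exact hzero a ha

theorem tailSpan_one_mul_le (hraise : ∀ i j, 0 < i → b i * b j ∈ tailSpan K b (j + 1))
    (r : ℕ) :
    tailSpan K b 1 * tailSpan K b r ≤ tailSpan K b (r + 1) := by
  rw [tailSpan, tailSpan, span_mul_span, span_le]
  rintro _ ⟨_, ⟨i, hi, rfl⟩, _, ⟨j, hj, rfl⟩, rfl⟩
  have hjr : r + 1 ≤ j + 1 := Nat.succ_le_succ (Set.mem_Ici.mp hj)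
  exact span_mono (Set.image_mono (Set.Ici_subset_Ici.mpr hjr)) (hraise i j (Set.mem_Ici.mp hi))

theorem pow_mem_tailSpan (hraise : ∀ i j, 0 < i → b i * b j ∈ tailSpan K b (j + 1))
    {x : S} (hx : x ∈ tailSpan K b 1) (n : ℕ) : x ^ (n + 1) ∈ tailSpan K b (n + 1) := by
  induction n with
  | zero => simpa using hx
  | succ n ih =>
    rw [pow_succ']
    exact tailSpan_one_mul_le hraise (n + 1) (mul_mem_mul hx ih)

theorem isNilpotent_of_mem_tailSpan_one {n : ℕ} (hzero : ∀ a, n < a → b a = 0)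
    (hraise : ∀ i j, 0 < i → b i * b j ∈ tailSpan K b (j + 1))
    {x : S} (hx : x ∈ tailSpan K b 1) : IsNilpotent x :=
  ⟨n + 1, by simpa [tailSpan_eq_bot hzero] using pow_mem_tailSpan hraise hx n⟩

theorem exists_sub_smul_mem_tailSpan_one {n : ℕ} {x : S}
    (hx : x ∈ span K (Set.range fun i : Fin (n + 1) => b i)) :
    ∃ c : K, x - c • b 0 ∈ tailSpan K b 1 := by
  have hrange : (Set.range fun i : Fin (n + 1) => b i) ⊆ {b 0} ∪ b '' Set.Ici 1 := by
    rintro _ ⟨i, rfl⟩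
    rcases Nat.eq_zero_or_pos i with hi | hi
    · exact Or.inl (by simp [hi])
    · exact Or.inr ⟨i, hi, rfl⟩
  obtain ⟨y, hy, z, hz, rfl⟩ := mem_sup.mp
    ((span_mono hrange).trans (span_union _ _).le hx)
  obtain ⟨c, rfl⟩ := mem_span_singleton.mp hy
  exact ⟨c, by simpa [tailSpan] using hz⟩

end TailSpan

theorem isLocalRing_of_forall_exists_isNilpotent_sub {K S : Type*} [Field K] [CommRing S]
    [Algebra K S] [Nontrivial S] (h : ∀ x : S, ∃ c : K, IsNilpotent (x - algebraMap K S c)) :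
    IsLocalRing S := by
  refine IsLocalRing.of_isUnit_or_isUnit_one_sub_self fun x => ?_
  obtain ⟨c, hc⟩ := h x
  rcases eq_or_ne c 0 with rfl | hc0
  · exact Or.inr (by simpa using hc.isUnit_one_sub)
  · have hu : IsUnit (algebraMap K S c) := (IsUnit.mk0 c hc0).map _
    exact Or.inl (by simpa using hc.isUnit_add_left_of_commute hu (Commute.all _ _))

theorem IsLocalRing.not_exists_orthogonal_idempotents {S : Type*} [CommRing S] [IsLocalRing S] :
    ¬ ∃ e f : S, IsIdempotentElem e ∧ IsIdempotentElem f ∧ e * f = 0 ∧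
        e ≠ 0 ∧ f ≠ 0 ∧ e + f = 1 := by
  rintro ⟨e, f, -, -, hef, he, hf, hsum⟩
  rcases IsLocalRing.isUnit_or_isUnit_of_add_one hsum with hu | hu
  · exact hf (hu.mul_left_cancel (by rw [hef, mul_zero]))
  · exact he (hu.mul_left_cancel (by rw [mul_comm, hef, mul_zero]))

theorem mul_mem_tailSpan_of_charTwo {K S : Type*} [Field K] [CharP K 2] [CommRing S]
    [Algebra K S] {n : ℕ} {b : ℕ → S} (hzero : ∀ a, n < a → b a = 0)
    (hmul : ∀ i j : ℕ, i ≤ n → j ≤ n →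
      b i * b j = ∑ k ∈ Finset.range (i + 1),
        ((Nat.choose (j + k) i * Nat.choose (j + k) k *
          Nat.choose (j + i) (i - k) : ℕ) : K) • b (j + k))
    (i j : ℕ) (hi : 0 < i) : b i * b j ∈ tailSpan K b (j + 1) := by
  rcases lt_or_ge n i with hni | hin
  · simp [hzero i hni]
  rcases lt_or_ge n j with hnj | hjn
  · simp [hzero j hnj]
  rw [hmul i j hin hjn, Finset.sum_range_succ']
  refine add_mem (sum_mem fun k _ => smul_mem _ _ (mem_tailSpan (by omega))) ?_
  have hcoef : ((j.choose i * (j + i).choose i : ℕ) : K) = 0 :=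
    (CharP.cast_eq_zero_iff K 2 _).mpr (Nat.two_dvd_choose_mul_choose_add i j hi)
  rw [Nat.cast_mul] at hcoef
  simp [hcoef]

theorem SK_m_zero_local_general {K : Type*} [Field K] [CharP K 2]
    {S : Type*} [CommRing S] [Algebra K S]
    (lam2 : ℕ)
    (b : ℕ → S)
    (hindep : LinearIndependent K (fun i : Fin (lam2 + 1) => b i))
    (hspan : Submodule.span K (Set.range fun i : Fin (lam2 + 1) => b i) = ⊤)
    (hzero : ∀ a : ℕ, lam2 < a → b a = 0)
    (hone : b 0 = 1)
    (hmul : ∀ i j : ℕ, i ≤ lam2 → j ≤ lam2 →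
      b i * b j = ∑ k ∈ Finset.range (i + 1),
        ((Nat.choose (j + k) i * Nat.choose (j + k) k *
          Nat.choose (j + i) (i - k) : ℕ) : K) • b (j + k)) :
    (¬ ∃ e f : S, IsIdempotentElem e ∧ IsIdempotentElem f ∧ e * f = 0 ∧
        e ≠ 0 ∧ f ≠ 0 ∧ e + f = 1) ∧
    (∀ g : ℕ, g ≤ lam2 → Odd (Nat.choose (2 * g) g) → g = 0) ∧
    IsLocalRing S := by
  have : Nontrivial S :=
    ⟨1, 0, by simpa [hone] using hindep.ne_zero (⟨0, lam2.succ_pos⟩ : Fin (lam2 + 1))⟩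
  have hlocal : IsLocalRing S := by
    refine isLocalRing_of_forall_exists_isNilpotent_sub (K := K) fun x => ?_
    obtain ⟨c, hc⟩ := exists_sub_smul_mem_tailSpan_one (hspan ▸ mem_top : x ∈ _)
    refine ⟨c, isNilpotent_of_mem_tailSpan_one hzero
      (mul_mem_tailSpan_of_charTwo hzero hmul) ?_⟩
    simpa [hone, Algebra.algebraMap_eq_smul_one] using hc
  refine ⟨IsLocalRing.not_exists_orthogonal_idempotents, fun g _ hodd => ?_, hlocal⟩
  by_contra hg
  rw [← Nat.centralBinom_eq_two_mul_choose, Nat.odd_iff] at hodd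
  have := Nat.two_dvd_centralBinom_of_one_le (Nat.pos_of_ne_zero hg)
  omega

theorem SK_m_zero_local {K : Type*} [Field K] [CharP K 2]
    {S : Type*} [CommRing S] [Algebra K S]
    (t : ℕ) (ht : 1 ≤ t) (lam2 : ℕ) (hlam2 : lam2 = t - 1)
    (b : ℕ → S)
    (hindep : LinearIndependent K (fun i : Fin (lam2 + 1) => b i))
    (hspan : Submodule.span K (Set.range fun i : Fin (lam2 + 1) => b i) = ⊤)
    (hzero : ∀ a : ℕ, lam2 < a → b a = 0)
    (hone : b 0 = 1)
    (hmul : ∀ i j : ℕ, i ≤ lam2 → j ≤ lam2 →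
      b i * b j = ∑ k ∈ Finset.range (i + 1),
        ((Nat.choose (j + k) i * Nat.choose (j + k) k *
          Nat.choose (j + i) (i - k) : ℕ) : K) • b (j + k)) :
    (¬ ∃ e f : S, IsIdempotentElem e ∧ IsIdempotentElem f ∧ e * f = 0 ∧
        e ≠ 0 ∧ f ≠ 0 ∧ e + f = 1) ∧
    (∀ g : ℕ, g ≤ lam2 → Odd (Nat.choose (2 * g) g) → g = 0) ∧
    IsLocalRing S :=
  SK_m_zero_local_general lam2 b hindep hspan hzero hone hmul
end
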